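/- arXiv:1608.08391 — 2 statements merged into one kernel-verified Lean document; each statement's English description precedes it below -/
import Mathlib

section
/- Let n ≥ 2 and 1 ≤ j, α ≤ n, and let x_{jα} : ℝ^{n×n} → ℝ be the matrix coefficient function x ↦ x_{jα}. Then on SO(n) one has τ(x_{jα}) = −((n−1)/2) · x_{jα}, i.e. for every x ∈ SO(n), Σ_{1 ≤ r < s ≤ n} (d²/ds²)|_{s=0} (x · exp(s·Y_{rs}))_{jα} = −((n−1)/2) · x_{jα}. -/
open Matrix

noncomputable section

/-- The matrix unit `E_{rs}` in `ℝ^{n×n}`. -/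
def matE (n : ℕ) (r s : Fin n) : Matrix (Fin n) (Fin n) ℝ :=
  Matrix.single r s 1

/-- `Y_{rs} = (E_{rs} − E_{sr})/√2`. -/
def matY (n : ℕ) (r s : Fin n) : Matrix (Fin n) (Fin n) ℝ :=
  (Real.sqrt 2)⁻¹ • (matE n r s - matE n s r)

/-- `Z(f)(x) = (d/ds)|₀ f(x·exp(sZ))`: derivative of `f` at `x` along the
left-invariant vector field determined by `Z`. -/
def lieD1 {n : ℕ} {E : Type*} [NormedAddCommGroup E] [NormedSpace ℝ E]
    (f : Matrix (Fin n) (Fin n) ℝ → E) (x Z : Matrix (Fin n) (Fin n) ℝ) : E :=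
  deriv (fun s : ℝ => f (x * NormedSpace.exp (s • Z))) 0

/-- `Z²(f)(x) = (d²/ds²)|₀ f(x·exp(sZ))`. -/
def lieD2 {n : ℕ} {E : Type*} [NormedAddCommGroup E] [NormedSpace ℝ E]
    (f : Matrix (Fin n) (Fin n) ℝ → E) (x Z : Matrix (Fin n) (Fin n) ℝ) : E :=
  deriv (deriv (fun s : ℝ => f (x * NormedSpace.exp (s • Z)))) 0

/-- The Laplace–Beltrami operator (tension field) on `SO(n)`:
`τ(f)(x) = Σ_{r<s} Y_{rs}²(f)(x)` for the standard orthonormal basis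
`B = {Y_{rs} : r < s}` of `so(n)`. -/
def tauSO (n : ℕ) {E : Type*} [NormedAddCommGroup E] [NormedSpace ℝ E]
    (f : Matrix (Fin n) (Fin n) ℝ → E) (x : Matrix (Fin n) (Fin n) ℝ) : E :=
  ∑ r : Fin n, ∑ s : Fin n, if r < s then lieD2 f x (matY n r s) else 0

/-- The conformality operator on `SO(n)`:
`κ(f,h)(x) = Σ_{r<s} Y_{rs}(f)(x)·Y_{rs}(h)(x)`. -/
def kappaSO (n : ℕ) {E : Type*} [NormedField E] [NormedSpace ℝ E]
    (f h : Matrix (Fin n) (Fin n) ℝ → E) (x : Matrix (Fin n) (Fin n) ℝ) : E :=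
  ∑ r : Fin n, ∑ s : Fin n, if r < s then
    lieD1 f x (matY n r s) * lieD1 h x (matY n r s) else 0

/-- The special orthogonal group `SO(n) = {x ∈ ℝ^{n×n} : x xᵗ = 1, det x = 1}`. -/
def SO (n : ℕ) : Set (Matrix (Fin n) (Fin n) ℝ) :=
  {x | x * x.transpose = 1 ∧ x.det = 1}


/-! For a linear function `L`, the curve `s ↦ L (x exp(sZ))` has second derivative `L (x Z²)` at
`0`, so `τ` acts on `L` through right multiplication by the Casimir element `∑_{r<s} Y_{rs}²`.
Since `Y_{rs}² = -(E_{rr} + E_{ss})/2` and every index lies in exactly `n - 1` pairs `r < s`,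
the Casimir element is `-((n - 1)/2) • 1`. Take `L = x_{jα}`. -/

section Derivatives

attribute [local instance] Matrix.linftyOpNormedAddCommGroup Matrix.linftyOpNormedRing
  Matrix.linftyOpNormedAlgebra

variable {n : ℕ} {E : Type*} [NormedAddCommGroup E] [NormedSpace ℝ E]

theorem hasDerivAt_mul_exp_smul (x Z : Matrix (Fin n) (Fin n) ℝ) (t : ℝ) :
    HasDerivAt (fun s : ℝ => x * NormedSpace.exp (s • Z))
      (x * NormedSpace.exp (t • Z) * Z) t := by
  rw [mul_assoc]
  exact (hasDerivAt_exp_smul_const (𝕂 := ℝ) Z t).const_mul x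

theorem lieD2_linearMap (L : Matrix (Fin n) (Fin n) ℝ →ₗ[ℝ] E)
    (x Z : Matrix (Fin n) (Fin n) ℝ) :
    lieD2 L x Z = L (x * (Z * Z)) := by
  let L' := LinearMap.toContinuousLinearMap L
  have first : deriv (fun s : ℝ => L (x * NormedSpace.exp (s • Z)))
      = fun t => L (x * NormedSpace.exp (t • Z) * Z) :=
    funext fun t => (L'.hasFDerivAt.comp_hasDerivAt t (hasDerivAt_mul_exp_smul x Z t)).deriv
  have second := L'.hasFDerivAt.comp_hasDerivAt 0 ((hasDerivAt_mul_exp_smul x Z 0).mul_const Z)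
  simp only [zero_smul, NormedSpace.exp_zero, mul_one] at second
  rw [lieD2, first, ← mul_assoc]
  exact second.deriv

end Derivatives

def casimirSO (n : ℕ) : Matrix (Fin n) (Fin n) ℝ :=
  ∑ r : Fin n, ∑ s : Fin n, if r < s then matY n r s * matY n r s else 0

theorem tauSO_linearMap {n : ℕ} {E : Type*} [NormedAddCommGroup E] [NormedSpace ℝ E]
    (L : Matrix (Fin n) (Fin n) ℝ →ₗ[ℝ] E) (x : Matrix (Fin n) (Fin n) ℝ) :
    tauSO n L x = L (x * casimirSO n) := by
  simp only [tauSO, casimirSO, lieD2_linearMap, Matrix.mul_sum, map_sum, mul_ite, mul_zero,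
    apply_ite L, map_zero]

theorem matY_mul_self {n : ℕ} {r s : Fin n} (h : r ≠ s) :
    matY n r s * matY n r s = (-(1 / 2) : ℝ) • (matE n r r + matE n s s) := by
  have half : (Real.sqrt 2)⁻¹ * (Real.sqrt 2)⁻¹ = 1 / 2 := by
    rw [← mul_inv, Real.mul_self_sqrt zero_le_two, one_div]
  simp only [matY, matE, smul_mul_smul_comm, sub_mul, mul_sub, single_mul_single_same,
    Matrix.single_mul_single_of_ne (c := (1 : ℝ)) _ _ _ h,
    Matrix.single_mul_single_of_ne (c := (1 : ℝ)) _ _ _ h.symm, sub_zero, zero_sub, half, mul_one]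
  module

theorem card_Ioi_add_card_Iio {n : ℕ} (a : Fin n) :
    (Finset.Ioi a).card + (Finset.Iio a).card = n - 1 := by
  rw [Fin.card_Ioi, Fin.card_Iio]
  omega

theorem sum_lt_matE_add_matE (n : ℕ) :
    ∑ r : Fin n, ∑ s : Fin n, (if r < s then matE n r r + matE n s s else 0)
      = ((n : ℝ) - 1) • (1 : Matrix (Fin n) (Fin n) ℝ) := by
  have count : ∀ r : Fin n,
      ∑ s, ((if r < s then matE n r r else 0) + (if s < r then matE n r r else 0))
        = ((n : ℝ) - 1) • matE n r r := by
    intro r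
    rw [Finset.sum_add_distrib, ← Finset.sum_filter, ← Finset.sum_filter, Finset.sum_const,
      Finset.sum_const, ← add_smul, Finset.filter_lt_eq_Ioi, Finset.filter_gt_eq_Iio,
      card_Ioi_add_card_Iio, ← Nat.cast_smul_eq_nsmul ℝ, Nat.cast_pred (Fin.pos r)]
  calc _ = ∑ r : Fin n, ∑ s : Fin n,
        ((if r < s then matE n r r else 0) + (if s < r then matE n r r else 0)) := by
        simp only [ite_add_zero, Finset.sum_add_distrib]
        rw [Finset.sum_comm (f := fun r s => if r < s then matE n s s else 0)]
    _ = ((n : ℝ) - 1) • ∑ r : Fin n, matE n r r := by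
        simp only [count, Finset.smul_sum]
    _ = _ := by simp only [matE, sum_single_one]

theorem casimirSO_eq (n : ℕ) :
    casimirSO n = -(((n : ℝ) - 1) / 2) • (1 : Matrix (Fin n) (Fin n) ℝ) := by
  have squares : casimirSO n = (-(1 / 2) : ℝ) •
      ∑ r : Fin n, ∑ s : Fin n, (if r < s then matE n r r + matE n s s else 0) := by
    simp only [casimirSO, Finset.smul_sum, smul_ite, smul_zero]
    refine Finset.sum_congr rfl fun r _ => Finset.sum_congr rfl fun s _ => ?_
    split_ifs with h
    · exact matY_mul_self h.ne
    · rfl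
  rw [squares, sum_lt_matE_add_matE, smul_smul]
  congr 1
  ring

theorem tau_coeff_SO_general (n : ℕ) (j α : Fin n) (x : Matrix (Fin n) (Fin n) ℝ) :
    tauSO n (fun w => w j α) x = -(((n : ℝ) - 1) / 2) * x j α := by
  change tauSO n (Matrix.entryLinearMap ℝ ℝ j α) x = _
  rw [tauSO_linearMap, casimirSO_eq, Matrix.mul_smul, Matrix.mul_one]
  simp only [Matrix.entryLinearMap_apply, Matrix.smul_apply, smul_eq_mul]

/-- on `SO(n)` one has `τ(x_{jα}) = −((n−1)/2)·x_{jα}`. -/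
theorem tau_coeff_SO (n : ℕ) (hn : 2 ≤ n) (j α : Fin n)
    (x : Matrix (Fin n) (Fin n) ℝ) (hx : x ∈ SO n) :
    tauSO n (fun w => w j α) x = -(((n : ℝ) - 1) / 2) * x j α :=
  tau_coeff_SO_general n j α x

end
end

section
/- Let n ≥ 2 and 1 ≤ j, k, α, β ≤ n, and let x_{jα}, x_{kβ} : ℝ^{n×n} → ℝ be the corresponding matrix coefficient functions. Then on SO(n) the conformality operator satisfies κ(x_{jα}, x_{kβ}) = −(1/2)·(x_{kα} x_{jβ} − δ_{kj} δ_{αβ}), i.e. for every x ∈ SO(n), Σ_{1 ≤ r < s ≤ n} ((d/ds)|_{s=0}(x·exp(sY_{rs}))_{jα}) · ((d/ds)|_{s=0}(x·exp(sY_{rs}))_{kβ}) = −(1/2)(x_{kα} x_{jβ} − δ_{kj} δ_{αβ}). -/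
/-!
Along the curve `s ↦ x exp(sZ)` the coordinate `w_{jα}` has derivative `(xZ)_{jα}`, so every term
of `κ` is a product of entries of `x Y_{rs}`. Since `Y_{sr} = -Y_{rs}` and `Y_{rr} = 0`, the sum over
`r < s` is half the sum over all pairs `(r, s)`, and that full sum is the contraction
`Σ_{r,s} (x(E_{rs} - E_{sr}))_{jα} (x(E_{rs} - E_{sr}))_{kβ} = 2((x xᵀ)_{jk} δ_{αβ} - x_{jβ} x_{kα})`,
which orthogonality `x xᵀ = I` turns into the claim.
-/

open Matrix

noncomputable section

theorem two_nsmul_sum_sum_ite_lt {ι M : Type*} [Fintype ι] [LinearOrder ι] [AddCommMonoid M]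
    (T : ι → ι → M) (hsymm : ∀ r s, T s r = T r s) (hdiag : ∀ r, T r r = 0) :
    2 • ∑ r, ∑ s, (if r < s then T r s else 0) = ∑ r, ∑ s, T r s := by
  have hsplit : ∀ r s, T r s = (if r < s then T r s else 0) + (if s < r then T s r else 0) := by
    intro r s
    rcases lt_trichotomy r s with h | rfl | h
    · simp [h, h.not_gt]
    · simp [hdiag]
    · simp [h, h.not_gt, hsymm]
  rw [two_nsmul]
  nth_rewrite 2 [Finset.sum_comm]
  simp only [← Finset.sum_add_distrib]
  exact Finset.sum_congr rfl fun r _ => Finset.sum_congr rfl fun s _ => (hsplit r s).symm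

theorem mul_single_sub_single_apply {ι m R : Type*} [Fintype ι] [DecidableEq ι] [Ring R]
    (x : Matrix m ι R) (r s : ι) (j : m) (α : ι) :
    (x * (single r s 1 - single s r 1 : Matrix ι ι R)) j α
      = (if s = α then x j r else 0) - (if r = α then x j s else 0) := by
  rw [Matrix.mul_sub, Matrix.sub_apply]
  simp [Matrix.mul_apply, Matrix.single_apply, ite_and, mul_ite, Finset.sum_ite_eq]

theorem sum_sum_mul_single_sub_single_apply_mul {ι m R : Type*} [Fintype ι] [DecidableEq ι]
    [CommRing R] (x : Matrix m ι R) (j k : m) (α β : ι) :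
    ∑ r, ∑ s, (x * (single r s 1 - single s r 1 : Matrix ι ι R)) j α
        * (x * (single r s 1 - single s r 1 : Matrix ι ι R)) k β
      = 2 * ((x * xᵀ) j k * (1 : Matrix ι ι R) α β - x j β * x k α) := by
  simp only [mul_single_sub_single_apply]
  simp only [sub_mul, mul_sub, ite_mul, mul_ite, zero_mul, mul_zero,
    mul_one, Finset.sum_sub_distrib, Finset.sum_ite_eq', Finset.mem_univ, if_true,
    Finset.sum_ite_irrel, Finset.sum_const_zero, Matrix.mul_apply, transpose_apply, one_apply,
    eq_comm (a := β) (b := α)]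
  split_ifs <;> ring

theorem lieD1_neg {n : ℕ} {E : Type*} [NormedAddCommGroup E] [NormedSpace ℝ E]
    (f : Matrix (Fin n) (Fin n) ℝ → E) (x Z : Matrix (Fin n) (Fin n) ℝ) :
    lieD1 f x (-Z) = -lieD1 f x Z := by
  simp only [lieD1, smul_neg, ← neg_smul]
  rw [deriv_comp_neg (f := fun s : ℝ => f (x * NormedSpace.exp (s • Z))), neg_zero]

theorem lieD1_zero {n : ℕ} {E : Type*} [NormedAddCommGroup E] [NormedSpace ℝ E]
    (f : Matrix (Fin n) (Fin n) ℝ → E) (x : Matrix (Fin n) (Fin n) ℝ) :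
    lieD1 f x 0 = 0 := by
  simp [lieD1]

theorem matY_swap (n : ℕ) (r s : Fin n) : matY n s r = -matY n r s := by
  rw [matY, matY, ← smul_neg, neg_sub]

theorem matY_self (n : ℕ) (r : Fin n) : matY n r r = 0 := by
  rw [matY, sub_self, smul_zero]

theorem two_nsmul_kappaSO (n : ℕ) {E : Type*} [NormedField E] [NormedSpace ℝ E]
    (f h : Matrix (Fin n) (Fin n) ℝ → E) (x : Matrix (Fin n) (Fin n) ℝ) :
    2 • kappaSO n f h x = ∑ r, ∑ s, lieD1 f x (matY n r s) * lieD1 h x (matY n r s) :=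
  two_nsmul_sum_sum_ite_lt _ (fun r s => by simp only [matY_swap n r s, lieD1_neg, neg_mul_neg])
    (fun r => by simp only [matY_self, lieD1_zero, mul_zero])

theorem lieD1_entry {n : ℕ} (j α : Fin n) (x Z : Matrix (Fin n) (Fin n) ℝ) :
    lieD1 (fun w => w j α) x Z = (x * Z) j α := by
  -- `NormedSpace.exp` and `HasDerivAt` only depend on the topology, so any algebra norm will do.
  let : NormedRing (Matrix (Fin n) (Fin n) ℝ) := Matrix.linftyOpNormedRing
  let : NormedAlgebra ℝ (Matrix (Fin n) (Fin n) ℝ) := Matrix.linftyOpNormedAlgebra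
  have hcurve := (hasDerivAt_exp_smul_const Z (0 : ℝ)).const_mul x
  rw [zero_smul, NormedSpace.exp_zero, one_mul] at hcurve
  exact (hasDerivAt_pi.1 (hasDerivAt_pi.1 hcurve j) α).deriv

theorem lieD1_entry_matY {n : ℕ} (x : Matrix (Fin n) (Fin n) ℝ) (r s j α : Fin n) :
    lieD1 (fun w => w j α) x (matY n r s)
      = (√2)⁻¹ * (x * (single r s 1 - single s r 1 : Matrix (Fin n) (Fin n) ℝ)) j α := by
  rw [lieD1_entry, matY, matE, matE, Matrix.mul_smul, Matrix.smul_apply, smul_eq_mul]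

theorem kappa_coeff_SO_general (n : ℕ) (j k α β : Fin n)
    (x : Matrix (Fin n) (Fin n) ℝ) (hx : x ∈ SO n) :
    kappaSO n (fun w => w j α) (fun w => w k β) x
      = -(1 / 2) * (x k α * x j β
          - (if k = j then (1 : ℝ) else 0) * (if α = β then (1 : ℝ) else 0)) := by
  have hinv : (√2)⁻¹ * (√2)⁻¹ = (2 : ℝ)⁻¹ := by
    rw [← mul_inv, Real.mul_self_sqrt zero_le_two]
  have htwice : 2 * kappaSO n (fun w => w j α) (fun w => w k β) x
      = (x * xᵀ) j k * (1 : Matrix (Fin n) (Fin n) ℝ) α β - x j β * x k α := by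
    rw [two_mul, ← two_nsmul, two_nsmul_kappaSO]
    simp only [lieD1_entry_matY, mul_mul_mul_comm _ _ (√2)⁻¹, hinv, ← Finset.mul_sum,
      sum_sum_mul_single_sub_single_apply_mul]
    ring
  simp only [hx.1, one_apply, eq_comm (a := j)] at htwice
  linarith

/-- on `SO(n)` the conformality operator satisfies
`κ(x_{jα}, x_{kβ}) = −(1/2)(x_{kα} x_{jβ} − δ_{kj} δ_{αβ})`. -/
theorem kappa_coeff_SO (n : ℕ) (hn : 2 ≤ n) (j k α β : Fin n)
    (x : Matrix (Fin n) (Fin n) ℝ) (hx : x ∈ SO n) :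
    kappaSO n (fun w => w j α) (fun w => w k β) x
      = -(1 / 2) * (x k α * x j β
          - (if k = j then (1 : ℝ) else 0) * (if α = β then (1 : ℝ) else 0)) :=
  kappa_coeff_SO_general n j k α β x hx

end
end
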